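/- The uncentered forward-in-time parabolic maximal operator M^+ is of weak type (1,1): there exists a constant c = c(n,p) (one may take c = 2·5^{n+p}) such that for every f ∈ L^1(ℝ^{n+1}) and every λ > 0, the Lebesgue measure of the set {(x,t) ∈ ℝ^{n+1} : M^+f(x,t) > λ} is at most (c/λ) ∫_{ℝ^{n+1}} |f|. -/

import Mathlib

open MeasureTheory Set ENNReal

noncomputable section

/-- The spatial cube `Q(x,L)` with center `x` and side length `L`. -/
def parQ (n : ℕ) (x : Fin n → ℝ) (L : ℝ) : Set (Fin n → ℝ) :=
  {y | ∀ i, |y i - x i| ≤ L / 2}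

/-- Lower part `R^-(γ)` of the parabolic rectangle `R(x,t,L)`. -/
def pMinus (n : ℕ) (p γ : ℝ) (x : Fin n → ℝ) (t L : ℝ) : Set ((Fin n → ℝ) × ℝ) :=
  (parQ n x L) ×ˢ Set.Ioo (t - L ^ p) (t - γ * L ^ p)

/-- Upper part `R^+(γ)` of the parabolic rectangle `R(x,t,L)`. -/
def pPlus (n : ℕ) (p γ : ℝ) (x : Fin n → ℝ) (t L : ℝ) : Set ((Fin n → ℝ) × ℝ) :=
  (parQ n x L) ×ˢ Set.Ioo (t + γ * L ^ p) (t + L ^ p)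

/-- The full parabolic rectangle `R(x,t,L)`. -/
def pRect (n : ℕ) (p : ℝ) (x : Fin n → ℝ) (t L : ℝ) : Set ((Fin n → ℝ) × ℝ) :=
  (parQ n x L) ×ˢ Set.Ioo (t - L ^ p) (t + L ^ p)

/-- A weight: a nonnegative locally integrable function on `ℝ^{n+1}`. -/
def IsWeight (n : ℕ) (w : (Fin n → ℝ) × ℝ → ℝ) : Prop :=
  (∀ z, 0 ≤ w z) ∧ MeasureTheory.LocallyIntegrable w volume

/-- The uncentered forward-in-time parabolic maximal function. -/
def Mplus (n : ℕ) (p : ℝ) (f : (Fin n → ℝ) × ℝ → ℝ) (z : (Fin n → ℝ) × ℝ) : ℝ≥0∞ :=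
  ⨆ (x : Fin n → ℝ) (t : ℝ) (L : ℝ) (_ : 0 < L) (_ : z ∈ pMinus n p 0 x t L),
    ENNReal.ofReal (⨍ y in pPlus n p 0 x t L, |f y|)

open Metric
open scoped NNReal

/-! Every point of the superlevel set lies in the lower half `R⁻` of a rectangle `R` on whose upper
half `R⁺` the average of `|f|` exceeds `λ`. The side lengths of these rectangles are bounded since
`|R⁺| ≤ ‖f‖₁ / λ`, so the Vitali covering lemma selects a disjoint subfamily whose fivefold
enlargements cover the set: a rectangle meeting `R(x', t', L')` with side `L ≤ 2L'` lies in
`R(x', t', 5L')` because `2 · 2^p + 1 ≤ 5^p` for `p ≥ 1`. Since `|R(x, t, 5L)| = 2 · 5^{n+p} |R⁺|`,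
summing `λ |R⁺| ≤ ∫_{R⁺} |f|` over the disjoint family gives the bound. -/

lemma two_mul_two_rpow_add_one_le_five_rpow {p : ℝ} (hp : 1 ≤ p) :
    2 * (2 : ℝ) ^ p + 1 ≤ 5 ^ p := by
  have h₁ : (2 : ℝ≥0) ^ p + 1 ^ p ≤ (2 + 1) ^ p := NNReal.add_rpow_le_rpow_add 2 1 hp
  have h₂ : (2 : ℝ≥0) ^ p + 3 ^ p ≤ (2 + 3) ^ p := NNReal.add_rpow_le_rpow_add 2 3 hp
  norm_num at h₁ h₂
  have h₁' : (2 : ℝ) ^ p + 1 ≤ 3 ^ p := by exact_mod_cast h₁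
  have h₂' : (2 : ℝ) ^ p + 3 ^ p ≤ 5 ^ p := by exact_mod_cast h₂
  linarith

lemma ofReal_mul_measure_le_setLIntegral_of_lt_setAverage {α : Type*} [MeasurableSpace α]
    {μ : Measure α} {s : Set α} {f : α → ℝ} (hf : IntegrableOn f s μ) (hs : μ s ≠ ∞) {lam : ℝ}
    (h : ENNReal.ofReal lam < ENNReal.ofReal (⨍ x in s, |f x| ∂μ)) :
    ENNReal.ofReal lam * μ s ≤ ∫⁻ x in s, ENNReal.ofReal |f x| ∂μ := by
  rw [ofReal_setAverage hf.abs (ae_of_all _ fun _ => abs_nonneg _)] at h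
  exact ((ENNReal.lt_div_iff_mul_lt (Or.inr ofReal_ne_top) (Or.inl hs)).1 h).le

section ParabolicRectangles

variable {n : ℕ} {p : ℝ} {x : Fin n → ℝ} {t L : ℝ}

lemma parQ_eq_closedBall (hL : 0 ≤ L) : parQ n x L = closedBall x (L / 2) := by
  ext y
  simp [parQ, closedBall_pi x (by positivity : 0 ≤ L / 2), Real.dist_eq]

lemma pRect_eq_closedBall_prod_ball (hL : 0 ≤ L) :
    pRect n p x t L = closedBall x (L / 2) ×ˢ ball t (L ^ p) := by
  rw [pRect, parQ_eq_closedBall hL, Real.ball_eq_Ioo]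

lemma measurableSet_pPlus (γ : ℝ) : MeasurableSet (pPlus n p γ x t L) := by
  refine MeasurableSet.prod ?_ measurableSet_Ioo
  simpa only [parQ, ofPred_forall] using
    MeasurableSet.iInter fun i => measurableSet_le (by fun_prop) measurable_const

lemma volume_parQ (hL : 0 ≤ L) : volume (parQ n x L) = ENNReal.ofReal (L ^ n) := by
  rw [parQ_eq_closedBall hL, Real.volume_pi_closedBall x (by positivity), Fintype.card_fin,
    mul_div_cancel₀ L two_ne_zero]

lemma volume_pPlus (hL : 0 ≤ L) :
    volume (pPlus n p 0 x t L) = ENNReal.ofReal (L ^ n * L ^ p) := by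
  rw [pPlus, Measure.volume_eq_prod, Measure.prod_prod, volume_parQ hL, Real.volume_Ioo,
    ← ENNReal.ofReal_mul (by positivity)]
  ring_nf

lemma volume_pRect (hL : 0 ≤ L) :
    volume (pRect n p x t L) = ENNReal.ofReal (L ^ n * (2 * L ^ p)) := by
  rw [pRect, Measure.volume_eq_prod, Measure.prod_prod, volume_parQ hL, Real.volume_Ioo,
    ← ENNReal.ofReal_mul (by positivity)]
  ring_nf

lemma volume_pRect_five_mul (hL : 0 ≤ L) :
    volume (pRect n p x t (5 * L)) =
      ENNReal.ofReal (2 * 5 ^ ((n : ℝ) + p)) * volume (pPlus n p 0 x t L) := by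
  rw [volume_pRect (by positivity), volume_pPlus hL, ← ENNReal.ofReal_mul (by positivity),
    mul_pow, Real.mul_rpow (by norm_num) hL, Real.rpow_add (by norm_num), Real.rpow_natCast]
  ring_nf

lemma pMinus_subset_pRect (hL : 0 ≤ L) : pMinus n p 0 x t L ⊆ pRect n p x t L := by
  have : 0 ≤ L ^ p := Real.rpow_nonneg hL p
  exact prod_mono le_rfl (Ioo_subset_Ioo_right (by linarith))

lemma pPlus_subset_pRect (hL : 0 ≤ L) : pPlus n p 0 x t L ⊆ pRect n p x t L := by
  have : 0 ≤ L ^ p := Real.rpow_nonneg hL p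
  exact prod_mono le_rfl (Ioo_subset_Ioo_left (by linarith))

lemma mem_interior_pRect (hL : 0 < L) : (x, t) ∈ interior (pRect n p x t L) := by
  rw [pRect_eq_closedBall_prod_ball hL.le, mem_interior_iff_mem_nhds]
  exact prod_mem_nhds (closedBall_mem_nhds x (by positivity))
    (ball_mem_nhds t (Real.rpow_pos_of_pos hL p))

lemma pRect_subset_pRect_five_mul (hp : 1 ≤ p) {x' : Fin n → ℝ} {t' L' : ℝ} (hL : 0 < L)
    (hL' : 0 < L') (hne : (pRect n p x t L ∩ pRect n p x' t' L').Nonempty)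
    (hle : L ≤ 2 * L') : pRect n p x t L ⊆ pRect n p x' t' (5 * L') := by
  rw [pRect_eq_closedBall_prod_ball hL.le, pRect_eq_closedBall_prod_ball hL'.le] at hne
  rw [pRect_eq_closedBall_prod_ball hL.le, pRect_eq_closedBall_prod_ball (by positivity)]
  obtain ⟨⟨y, s⟩, ⟨hy, hs⟩, ⟨hy', hs'⟩⟩ := hne
  have hx : dist x x' ≤ L / 2 + L' / 2 := (dist_triangle_left x x' y).trans (add_le_add hy hy')
  have ht : dist t t' < L ^ p + L' ^ p := (dist_triangle_left t t' s).trans_lt (add_lt_add hs hs')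
  have hLp : L ^ p ≤ 2 ^ p * L' ^ p := by
    rw [← Real.mul_rpow (by norm_num) hL'.le]
    exact Real.rpow_le_rpow hL.le hle (by linarith)
  have h5 : 2 * 2 ^ p * L' ^ p + L' ^ p ≤ (5 * L') ^ p := by
    rw [Real.mul_rpow (by norm_num) hL'.le]
    nlinarith [two_mul_two_rpow_add_one_le_five_rpow hp, Real.rpow_pos_of_pos hL' p]
  exact prod_mono (closedBall_subset_closedBall' (by linarith))
    (ball_subset_ball' (by linarith))

end ParabolicRectangles

section WeakType

variable {n : ℕ} {p : ℝ}

lemma exists_pRect_of_ofReal_lt_Mplus {f : (Fin n → ℝ) × ℝ → ℝ} (hf : Integrable f)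
    {lam : ℝ} {z : (Fin n → ℝ) × ℝ} (hz : ENNReal.ofReal lam < Mplus n p f z) :
    ∃ x t L, 0 < L ∧ z ∈ pRect n p x t L ∧
      ENNReal.ofReal lam * volume (pPlus n p 0 x t L) ≤
        ∫⁻ y in pPlus n p 0 x t L, ENNReal.ofReal |f y| := by
  simp only [Mplus, lt_iSup_iff] at hz
  obtain ⟨x, t, L, hL, hzL, hlt⟩ := hz
  refine ⟨x, t, L, hL, pMinus_subset_pRect hL.le hzL, ?_⟩
  exact ofReal_mul_measure_le_setLIntegral_of_lt_setAverage hf.integrableOn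
    (by rw [volume_pPlus hL.le]; exact ofReal_ne_top) hlt

lemma le_max_one_div_of_ofReal_mul_volume_pPlus_le (hp : 1 ≤ p) {x : Fin n → ℝ}
    {t L lam I : ℝ} (hL : 0 < L) (hlam : 0 < lam)
    (h : ENNReal.ofReal lam * volume (pPlus n p 0 x t L) ≤ ENNReal.ofReal I) :
    L ≤ max 1 (I / lam) := by
  rcases le_or_gt L 1 with hL1 | hL1
  · exact le_max_of_le_left hL1
  have hLp : L ≤ L ^ p := by
    simpa using Real.rpow_le_rpow_of_exponent_le hL1.le hp
  have hLn : 1 ≤ L ^ n := one_le_pow₀ hL1.le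
  have hvol : lam * (L ^ n * L ^ p) ≤ I := by
    rw [volume_pPlus hL.le, ← ENNReal.ofReal_mul hlam.le,
      ENNReal.ofReal_le_ofReal_iff'] at h
    exact h.resolve_right (not_le.2 (by positivity))
  refine le_max_of_le_right ((le_div_iff₀ hlam).2 ?_)
  nlinarith [mul_le_mul hLn hLp hL.le (by positivity)]

lemma exists_countable_disjoint_pRect_cover {ι : Type*} (hp : 1 ≤ p) (x : ι → Fin n → ℝ)
    (t L : ι → ℝ) {s : Set ι} (hL : ∀ i ∈ s, 0 < L i) {R : ℝ} (hLR : ∀ i ∈ s, L i ≤ R) :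
    ∃ u ⊆ s, u.Countable ∧ u.PairwiseDisjoint (fun i => pRect n p (x i) (t i) (L i)) ∧
      ∀ i ∈ s, ∃ j ∈ u, pRect n p (x i) (t i) (L i) ⊆ pRect n p (x j) (t j) (5 * L j) := by
  obtain ⟨u, hus, hdisj, hcover⟩ := Vitali.exists_disjoint_subfamily_covering_enlargement
    (fun i => pRect n p (x i) (t i) (L i)) s L 2 one_lt_two (fun i hi => (hL i hi).le) R hLR
    (fun i hi => ⟨_, interior_subset (mem_interior_pRect (hL i hi))⟩)
  refine ⟨u, hus, hdisj.countable_of_nonempty_interior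
    fun j hj => ⟨_, mem_interior_pRect (hL j (hus hj))⟩, hdisj, fun i hi => ?_⟩
  obtain ⟨j, hj, hne, hle⟩ := hcover i hi
  exact ⟨j, hj, pRect_subset_pRect_five_mul hp (hL i hi) (hL j (hus hj)) hne hle⟩

lemma ofReal_mul_volume_le_of_forall_mem_pRect (hp : 1 ≤ p)
    {g : (Fin n → ℝ) × ℝ → ℝ≥0∞} (hg : ∫⁻ z, g z ≠ ∞) {lam : ℝ} (hlam : 0 < lam)
    {S : Set ((Fin n → ℝ) × ℝ)}
    (hS : ∀ z ∈ S, ∃ x t L, 0 < L ∧ z ∈ pRect n p x t L ∧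
      ENNReal.ofReal lam * volume (pPlus n p 0 x t L) ≤ ∫⁻ y in pPlus n p 0 x t L, g y) :
    ENNReal.ofReal lam * volume S ≤
      ENNReal.ofReal (2 * 5 ^ ((n : ℝ) + p)) * ∫⁻ z, g z := by
  choose! x t L hL hzR havg using hS
  have hLR : ∀ z ∈ S, L z ≤ max 1 ((∫⁻ y, g y).toReal / lam) := fun z hz =>
    le_max_one_div_of_ofReal_mul_volume_pPlus_le hp (hL z hz) hlam <|
      (havg z hz).trans <| (setLIntegral_le_lintegral _ _).trans (ofReal_toReal hg).ge
  obtain ⟨u, hus, hu, hdisj, hcover⟩ := exists_countable_disjoint_pRect_cover hp x t L hL hLR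
  have hSu : S ⊆ ⋃ j ∈ u, pRect n p (x j) (t j) (5 * L j) := fun z hz => by
    obtain ⟨j, hj, hsub⟩ := hcover z hz
    exact mem_biUnion hj (hsub (hzR z hz))
  have hdisj' : u.PairwiseDisjoint (fun j => pPlus n p 0 (x j) (t j) (L j)) :=
    hdisj.mono_on fun j hj => pPlus_subset_pRect (hL j (hus hj)).le
  calc ENNReal.ofReal lam * volume S
      ≤ ENNReal.ofReal lam * ∑' j : u, volume (pRect n p (x j) (t j) (5 * L j)) := by
        gcongr
        exact (measure_mono hSu).trans (measure_biUnion_le _ hu _)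
    _ = ENNReal.ofReal (2 * 5 ^ ((n : ℝ) + p)) *
          ∑' j : u, ENNReal.ofReal lam * volume (pPlus n p 0 (x j) (t j) (L j)) := by
        simp_rw [volume_pRect_five_mul (hL _ (hus (Subtype.prop _))).le, ENNReal.tsum_mul_left]
        ring
    _ ≤ ENNReal.ofReal (2 * 5 ^ ((n : ℝ) + p)) *
          ∑' j : u, ∫⁻ y in pPlus n p 0 (x j) (t j) (L j), g y := by
        gcongr with j
        exact havg j (hus j.2)
    _ ≤ ENNReal.ofReal (2 * 5 ^ ((n : ℝ) + p)) * ∫⁻ z, g z := by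
        rw [← lintegral_biUnion hu (fun j _ => measurableSet_pPlus 0) hdisj']
        gcongr
        exact Measure.restrict_le_self

end WeakType

/-- The parabolic maximal operator `M^+` is of weak type `(1,1)`. -/
theorem stmt_10 (n : ℕ) (p : ℝ) (hp : 1 < p) :
    ∃ c > (0 : ℝ), ∀ f : (Fin n → ℝ) × ℝ → ℝ, MeasureTheory.Integrable f volume →
      ∀ lam : ℝ, 0 < lam →
        volume {z | ENNReal.ofReal lam < Mplus n p f z} ≤
          ENNReal.ofReal ((c / lam) * ∫ z, |f z|) := by
  refine ⟨2 * 5 ^ ((n : ℝ) + p), by positivity, fun f hf lam hlam => ?_⟩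
  have hnorm : ENNReal.ofReal (∫ z, |f z|) = ∫⁻ z, ENNReal.ofReal |f z| :=
    ofReal_integral_eq_lintegral_ofReal hf.abs (ae_of_all _ fun _ => abs_nonneg _)
  have key := ofReal_mul_volume_le_of_forall_mem_pRect hp.le (hnorm ▸ ofReal_ne_top) hlam
    fun z hz => exists_pRect_of_ofReal_lt_Mplus hf hz
  rw [← hnorm, ← ENNReal.ofReal_mul (by positivity), mul_comm] at key
  rw [div_mul_eq_mul_div, ENNReal.ofReal_div_of_pos hlam]
  exact (ENNReal.le_div_iff_mul_le (Or.inl (by simpa using hlam)) (Or.inl ofReal_ne_top)).2 key
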